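/- arXiv:2212.05002 — 2 statements merged into one kernel-verified Lean document; each statement's English description precedes it below -/
import Mathlib

section
/- Consider the set of fully commutative permutations of S_n, partially ordered by the right weak order. The uncrowded permutations form an order ideal of this poset, and the crowded permutations form a dual order ideal: if v ≤ w are fully commutative and w is uncrowded then v is uncrowded, and if v is crowded then w is crowded. -/
/-- The value in position `j` (0-indexed) of the one-line notation of `w`,
extended by the identity outside the range `[0, n)`. -/
def entry {n : ℕ} (w : Equiv.Perm (Fin n)) (j : ℕ) : ℕ :=
  if h : j < n then (w ⟨j, h⟩ : ℕ) else j

/-- One-line notation of a permutation, as a list of natural numbers (0-indexed values). -/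
def oneLine {n : ℕ} (w : Equiv.Perm (Fin n)) : List ℕ :=
  List.ofFn (fun i => (w i : ℕ))

/-- A permutation is fully commutative iff it avoids the pattern 321. -/
def FullyCommutative {n : ℕ} (w : Equiv.Perm (Fin n)) : Prop :=
  ¬ ∃ i j k : Fin n, i < j ∧ j < k ∧ w k < w j ∧ w j < w i

/-- A permutation is boolean iff it avoids the patterns 321 and 3412. -/
def BooleanPerm {n : ℕ} (w : Equiv.Perm (Fin n)) : Prop :=
  FullyCommutative w ∧
    ¬ ∃ i j k l : Fin n, i < j ∧ j < k ∧ k < l ∧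
        w k < w l ∧ w l < w i ∧ w i < w j

/-- The Coxeter length of a permutation: its number of inversions. -/
def invCount {n : ℕ} (w : Equiv.Perm (Fin n)) : ℕ :=
  (Finset.univ.filter fun p : Fin n × Fin n => p.1 < p.2 ∧ w p.2 < w p.1).card

/-- The support of `w`: the set of (0-indexed) indices `i` such that the simple
transposition `s_i` appears in some (equivalently, every) reduced word of `w`;
equivalently, `{w(0),…,w(i)} ≠ {0,…,i}`, i.e. `max {w(j) : j ≤ i} > i`. -/
def Supp {n : ℕ} (w : Equiv.Perm (Fin n)) : Set ℕ :=
  {i | ∃ j : Fin n, (j : ℕ) ≤ i ∧ i < (w j : ℕ)}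

/-- The simple transposition `s_i`, swapping positions `i` and `i+1` (0-indexed). -/
def simpleTr {n : ℕ} (i : ℕ) (h : i + 1 < n) : Equiv.Perm (Fin n) :=
  Equiv.swap ⟨i, by omega⟩ ⟨i + 1, h⟩

/-- Schensted row insertion of a value into a tableau (a list of rows). -/
def rowInsert : List (List ℕ) → ℕ → List (List ℕ)
  | [], x => [[x]]
  | r :: rest, x =>
    match r.find? (fun y => decide (x < y)) with
    | none => (r ++ [x]) :: rest
    | some y => (r.map fun z => if z = y then x else z) :: rowInsert rest y

/-- RSK insertion tableau of a list. -/
def RSKList (l : List ℕ) : List (List ℕ) := l.foldl rowInsert []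

/-- RSK insertion tableau `P(w)` of a permutation. -/
def RSKP {n : ℕ} (w : Equiv.Perm (Fin n)) : List (List ℕ) := RSKList (oneLine w)

/-- RSK recording tableau `Q(w) = P(w⁻¹)`. -/
def RSKQ {n : ℕ} (w : Equiv.Perm (Fin n)) : List (List ℕ) := RSKP w⁻¹

/-- The set of entries in the first row of a tableau. -/
def Row1 (T : List (List ℕ)) : Finset ℕ := (T.getD 0 []).toFinset

/-- The set of entries in the second row of a tableau. -/
def Row2 (T : List (List ℕ)) : Finset ℕ := (T.getD 1 []).toFinset

/-- `BumpsAt l k z` : during the RSK insertion of the list `l`, the insertion of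
the `(k+1)`-st letter of `l` bumps the value `z` from the first row to the
second row (`z` is the smallest first-row entry larger than the inserted letter). -/
def BumpsAt (l : List ℕ) (k : ℕ) (z : ℕ) : Prop :=
  k < l.length ∧
    ((RSKList (l.take k)).getD 0 []).find? (fun y => decide (l.getD k 0 < y)) = some z

/-- `Bumps l b z` : during the RSK insertion of `l`, the value `b` bumps the
value `z` from the first row to the second row. -/
def Bumps (l : List ℕ) (b z : ℕ) : Prop :=
  ∃ k, l.getD k 0 = b ∧ BumpsAt l k z

/-- A finite set of naturals is crowded if some integer interval `[y, y+2x]`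
(with `x > 0`) contains more than `x+1` of its elements. -/
def CrowdedSet (L : Finset ℕ) : Prop :=
  ∃ x y : ℤ, 0 < x ∧
    x + 1 < ((L.filter fun a : ℕ => y ≤ (a : ℤ) ∧ (a : ℤ) ≤ y + 2 * x).card : ℤ)

/-- A fully commutative permutation is crowded if the second row of its RSK
insertion tableau is a crowded set. -/
def CrowdedPerm {n : ℕ} (w : Equiv.Perm (Fin n)) : Prop :=
  CrowdedSet (Row2 (RSKP w))

/-- Covering relation of the right weak order. -/
def RWCovers {n : ℕ} (u v : Equiv.Perm (Fin n)) : Prop :=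
  ∃ i, ∃ h : i + 1 < n, v = u * simpleTr i h ∧ invCount v = invCount u + 1

/-- The right weak order on `S_n`. -/
def RightWeakLE {n : ℕ} : Equiv.Perm (Fin n) → Equiv.Perm (Fin n) → Prop :=
  Relation.ReflTransGen RWCovers

/-- Covering relation of the left weak order. -/
def LWCovers {n : ℕ} (u v : Equiv.Perm (Fin n)) : Prop :=
  ∃ i, ∃ h : i + 1 < n, v = simpleTr i h * u ∧ invCount v = invCount u + 1

/-- The left weak order on `S_n`. -/
def LeftWeakLE {n : ℕ} : Equiv.Perm (Fin n) → Equiv.Perm (Fin n) → Prop :=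
  Relation.ReflTransGen LWCovers

/-- A minimal crowded permutation: a crowded fully commutative permutation all of
whose strict predecessors (among fully commutative permutations) in the right
weak order are uncrowded. -/
def MinimalCrowded {n : ℕ} (w : Equiv.Perm (Fin n)) : Prop :=
  FullyCommutative w ∧ CrowdedPerm w ∧
    ∀ v : Equiv.Perm (Fin n), FullyCommutative v → RightWeakLE v w → v ≠ w →
      ¬ CrowdedPerm v

/-- `l` is an increasing subsequence of the one-line notation of `w`. -/
def IncreasingSubseq {n : ℕ} (w : Equiv.Perm (Fin n)) (l : List ℕ) : Prop :=
  l.Sublist (oneLine w) ∧ l.Pairwise (· < ·)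

/-- The length of a longest increasing subsequence of `w`. -/
noncomputable def lisLen {n : ℕ} (w : Equiv.Perm (Fin n)) : ℕ :=
  sSup {k | ∃ l : List ℕ, IncreasingSubseq w l ∧ l.length = k}

/-- A consecutive occurrence of the pattern 415263 starting at (0-indexed) position `i`. -/
def Consec415263 {n : ℕ} (w : Equiv.Perm (Fin n)) (i : ℕ) : Prop :=
  i + 5 < n ∧
    entry w (i + 1) < entry w (i + 3) ∧ entry w (i + 3) < entry w (i + 5) ∧
    entry w (i + 5) < entry w i ∧ entry w i < entry w (i + 2) ∧
    entry w (i + 2) < entry w (i + 4)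

/-- A consecutive occurrence of the pattern 315264 starting at (0-indexed) position `i`. -/
def Consec315264 {n : ℕ} (w : Equiv.Perm (Fin n)) (i : ℕ) : Prop :=
  i + 5 < n ∧
    entry w (i + 1) < entry w (i + 3) ∧ entry w (i + 3) < entry w i ∧
    entry w i < entry w (i + 5) ∧ entry w (i + 5) < entry w (i + 2) ∧
    entry w (i + 2) < entry w (i + 4)

/-- An occurrence (not necessarily consecutive) of the pattern 415263 in `w`,
at positions `p 0 < p 1 < ⋯ < p 5`. -/
def Occ415263 {n : ℕ} (w : Equiv.Perm (Fin n)) (p : Fin 6 → Fin n) : Prop :=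
  StrictMono p ∧
    w (p 1) < w (p 3) ∧ w (p 3) < w (p 5) ∧ w (p 5) < w (p 0) ∧
    w (p 0) < w (p 2) ∧ w (p 2) < w (p 4)

/-!
For a 321-avoiding word, Schensted insertion never reaches a third row, so the second row of
`P` is the set of letters not in the first row. The first row evolves by patience sorting, which
is monotone in the set of entries. If `w = v s_i` covers `v`, then `w` reads `… b a …` where `v`
reads `… a b …` with `a < b`, and every earlier letter is below `b` (else it would form a 321
with `b a`); inserting `b` before `a` can then only shrink the first row. So the second row of
`P(v)` is contained in that of `P(w)`, and crowdedness is monotone in the set.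
-/

open scoped List

lemma toFinset_append_singleton (r : List ℕ) (x : ℕ) :
    (r ++ [x]).toFinset = insert x r.toFinset := by
  ext; simp

lemma toFinset_map_replace {r : List ℕ} {x y : ℕ} (hy : y ∈ r) :
    (r.map fun z => if z = y then x else z).toFinset = insert x (r.toFinset.erase y) := by
  ext a
  simp only [List.mem_toFinset, List.mem_map, Finset.mem_insert, Finset.mem_erase]
  constructor
  · rintro ⟨z, hz, rfl⟩
    split_ifs with h
    · exact Or.inl rfl
    · exact Or.inr ⟨h, hz⟩
  · rintro (rfl | ⟨hay, ha⟩)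
    · exact ⟨y, hy, if_pos rfl⟩
    · exact ⟨a, ha, if_neg hay⟩

lemma getD_tail_zero (T : List (List ℕ)) : T.tail.getD 0 [] = T.getD 1 [] := by
  cases T <;> rfl

lemma isLeast_of_find?_lt_eq_some {r : List ℕ} {x y : ℕ} (hr : r.Pairwise (· ≤ ·))
    (h : r.find? (x < ·) = some y) : IsLeast {a | a ∈ r ∧ x < a} y := by
  obtain ⟨hxy, as, bs, rfl, has⟩ := List.find?_eq_some_iff_append.mp h
  simp only [decide_eq_true_eq] at hxy
  simp only [Bool.not_eq_true', decide_eq_false_iff_not, not_lt] at has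
  refine ⟨⟨by simp, hxy⟩, fun a ⟨ha, hxa⟩ => ?_⟩
  simp only [List.pairwise_append, List.pairwise_cons] at hr
  rcases List.mem_append.mp ha with ha | ha
  · exact absurd (has a ha) (not_le.mpr hxa)
  · rcases List.mem_cons.mp ha with rfl | ha
    · exact le_rfl
    · exact hr.2.1.1 a ha

lemma pairwise_map_replace {r : List ℕ} {x y : ℕ} (hr : r.Pairwise (· ≤ ·))
    (h : r.find? (x < ·) = some y) :
    (r.map fun z => if z = y then x else z).Pairwise (· ≤ ·) := by
  obtain ⟨⟨-, hxy⟩, hmin⟩ := isLeast_of_find?_lt_eq_some hr h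
  have below : ∀ a ∈ r, a < y → a ≤ x := fun a ha hay =>
    not_lt.mp fun hxa => (hmin ⟨ha, hxa⟩).not_gt hay
  refine List.pairwise_map.mpr (hr.imp_of_mem fun {a b} ha hb hab => ?_)
  split_ifs with hay <;> subst_vars
  · exact le_rfl
  · exact hxy.le.trans hab
  · exact below a ha (lt_of_le_of_ne hab hay)
  · exact hab

lemma pair_sublist_append_singleton {u : List ℕ} {z : ℕ} (hz : z ∈ u) (x : ℕ) :
    [z, x] <+ u ++ [x] :=
  (List.singleton_sublist.mpr hz).append (List.Sublist.refl [x])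

lemma RSKList_append_singleton (u : List ℕ) (x : ℕ) :
    RSKList (u ++ [x]) = rowInsert (RSKList u) x := by
  simp [RSKList]

lemma rowInsert_of_find?_eq_none {T : List (List ℕ)} {x : ℕ}
    (h : (T.getD 0 []).find? (x < ·) = none) :
    rowInsert T x = (T.getD 0 [] ++ [x]) :: T.tail := by
  cases T with
  | nil => rfl
  | cons r rest => simp_all only [List.getD_cons_zero, rowInsert, List.tail_cons]

lemma rowInsert_of_find?_eq_some {T : List (List ℕ)} {x y : ℕ}
    (h : (T.getD 0 []).find? (x < ·) = some y) :
    rowInsert T x =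
      (T.getD 0 []).map (fun z => if z = y then x else z) :: rowInsert T.tail y := by
  cases T with
  | nil => simp at h
  | cons r rest => simp_all only [List.getD_cons_zero, rowInsert, List.tail_cons]

lemma rows_rowInsert_of_find?_eq_none {T : List (List ℕ)} {x : ℕ}
    (h : (T.getD 0 []).find? (x < ·) = none) :
    Row1 (rowInsert T x) = insert x (Row1 T) ∧ Row2 (rowInsert T x) = Row2 T := by
  rw [rowInsert_of_find?_eq_none h, Row1, Row1, Row2, Row2, List.getD_cons_zero,
    List.getD_cons_succ, toFinset_append_singleton, getD_tail_zero]
  exact ⟨rfl, rfl⟩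

lemma rows_rowInsert_of_find?_eq_some {T : List (List ℕ)} {x y : ℕ}
    (h : (T.getD 0 []).find? (x < ·) = some y) (hrow2 : ∀ z ∈ Row2 T, z ≤ y) :
    Row1 (rowInsert T x) = insert x ((Row1 T).erase y) ∧
      Row2 (rowInsert T x) = insert y (Row2 T) := by
  have h2 : (T.tail.getD 0 []).find? (y < ·) = none := by
    simpa [getD_tail_zero, Row2] using hrow2
  rw [rowInsert_of_find?_eq_some h]
  refine ⟨toFinset_map_replace (List.mem_of_find?_eq_some h), ?_⟩
  rw [Row2, List.getD_cons_succ, rowInsert_of_find?_eq_none h2, List.getD_cons_zero,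
    toFinset_append_singleton, Row2, getD_tail_zero]

/-- The first row of Schensted insertion, as a set: `x` replaces the least entry exceeding it,
if there is one. -/
def patienceStep (s : Finset ℕ) (x : ℕ) : Finset ℕ :=
  insert x (s.filter fun a => ¬ (x < a ∧ ∀ b ∈ s, x < b → a ≤ b))

lemma patienceStep_of_forall_le {s : Finset ℕ} {x : ℕ} (h : ∀ a ∈ s, a ≤ x) :
    patienceStep s x = insert x s := by
  rw [patienceStep, Finset.filter_true_of_mem fun a ha ⟨hxa, _⟩ => (h a ha).not_gt hxa]

lemma patienceStep_of_isLeast {s : Finset ℕ} {x y : ℕ}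
    (hy : IsLeast {a | a ∈ s ∧ x < a} y) :
    patienceStep s x = insert x (s.erase y) := by
  rw [patienceStep, Finset.filter_not, ← Finset.sdiff_singleton_eq_erase]
  congr 2
  ext a
  simp only [Finset.mem_filter, Finset.mem_singleton]
  constructor
  · rintro ⟨ha, hxa, hamin⟩
    exact le_antisymm (hamin y hy.1.1 hy.1.2) (hy.2 ⟨ha, hxa⟩)
  · rintro rfl
    exact ⟨hy.1.1, hy.1.2, fun b hb hxb => hy.2 ⟨hb, hxb⟩⟩

lemma patienceStep_subset_insert (s : Finset ℕ) (x : ℕ) : patienceStep s x ⊆ insert x s :=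
  Finset.insert_subset_insert x (Finset.filter_subset _ s)

lemma foldl_patienceStep_subset (s : Finset ℕ) (l : List ℕ) :
    l.foldl patienceStep s ⊆ s ∪ l.toFinset := by
  induction l generalizing s with
  | nil => simp
  | cons x l ih =>
    calc l.foldl patienceStep (patienceStep s x) ⊆ patienceStep s x ∪ l.toFinset := ih _
      _ ⊆ insert x s ∪ l.toFinset :=
        Finset.union_subset_union (patienceStep_subset_insert s x) subset_rfl
      _ = s ∪ (x :: l).toFinset := by ext; simp

lemma patienceStep_mono {s t : Finset ℕ} (hst : s ⊆ t) (x : ℕ) :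
    patienceStep s x ⊆ patienceStep t x := by
  refine Finset.insert_subset_insert x fun a ha => ?_
  obtain ⟨has, hleast⟩ := Finset.mem_filter.mp ha
  exact Finset.mem_filter.mpr ⟨hst has, fun ⟨hxa, hmin⟩ =>
    hleast ⟨hxa, fun b hb => hmin b (hst hb)⟩⟩

lemma foldl_patienceStep_mono {s t : Finset ℕ} (hst : s ⊆ t) (l : List ℕ) :
    l.foldl patienceStep s ⊆ l.foldl patienceStep t := by
  induction l generalizing s t with
  | nil => exact hst
  | cons x l ih => exact ih (patienceStep_mono hst x)

lemma RSKList_first_row (l : List ℕ) :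
    ((RSKList l).getD 0 []).Pairwise (· ≤ ·) ∧
      Row1 (RSKList l) = l.foldl patienceStep ∅ := by
  induction l using List.reverseRecOn with
  | nil => simp [RSKList, Row1]
  | append_singleton u x ih =>
    obtain ⟨hsorted, hrow⟩ := ih
    rw [RSKList_append_singleton, List.foldl_append, List.foldl_cons, List.foldl_nil, ← hrow,
      Row1]
    rcases h : ((RSKList u).getD 0 []).find? (x < ·) with _ | y
    · have hle : ∀ a ∈ (RSKList u).getD 0 [], a ≤ x := by simpa using h
      rw [rowInsert_of_find?_eq_none h, Row1, patienceStep_of_forall_le (by simpa using hle)]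
      exact ⟨List.pairwise_append.mpr ⟨hsorted, by simp, by simpa using hle⟩,
        toFinset_append_singleton _ x⟩
    · have hy := isLeast_of_find?_lt_eq_some hsorted h
      rw [rowInsert_of_find?_eq_some h, Row1, patienceStep_of_isLeast (by simpa using hy)]
      exact ⟨pairwise_map_replace hsorted h, toFinset_map_replace hy.1.1⟩

lemma patienceStep_swap_subset {s : Finset ℕ} {a b : ℕ} (hs : ∀ c ∈ s, c < b)
    (hab : a < b) :
    patienceStep (patienceStep s b) a ⊆ patienceStep (patienceStep s a) b := by
  have hb : patienceStep s b = insert b s :=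
    patienceStep_of_forall_le fun c hc => (hs c hc).le
  have hab' : patienceStep (patienceStep s a) b = insert b (patienceStep s a) := by
    refine patienceStep_of_forall_le fun c hc => ?_
    rcases Finset.mem_insert.mp (patienceStep_subset_insert s a hc) with rfl | hc
    · exact hab.le
    · exact (hs c hc).le
  rw [hb, hab']
  intro c hc
  rcases Finset.mem_insert.mp hc with rfl | hc
  · exact Finset.mem_insert_of_mem (Finset.mem_insert_self _ _)
  obtain ⟨hcbs, hleast⟩ := Finset.mem_filter.mp hc
  rcases Finset.mem_insert.mp hcbs with rfl | hcs
  · exact Finset.mem_insert_self _ _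
  refine Finset.mem_insert_of_mem (Finset.mem_insert_of_mem (Finset.mem_filter.mpr ⟨hcs, ?_⟩))
  rintro ⟨hac, hmin⟩
  refine hleast ⟨hac, fun d hd had => ?_⟩
  rcases Finset.mem_insert.mp hd with hdb | hd
  · exact hdb ▸ (hs c hcs).le
  · exact hmin d hd had

def Avoids321 (l : List ℕ) : Prop :=
  ¬ ∃ a b c, [a, b, c] <+ l ∧ c < b ∧ b < a

lemma Avoids321.of_sublist {l l' : List ℕ} (h : Avoids321 l') (hl : l <+ l') : Avoids321 l :=
  fun ⟨a, b, c, hsub, hcb, hba⟩ => h ⟨a, b, c, hsub.trans hl, hcb, hba⟩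

/-- The `witness` field keeps a third row from appearing: if `x` bumps `y` out of row one while
some `z > y` sits in row two, then `z c x` is a 321 pattern. -/
structure TwoRowInvariant (u : List ℕ) : Prop where
  letters : u.toFinset = Row1 (RSKList u) ∪ Row2 (RSKList u)
  disjoint : Disjoint (Row1 (RSKList u)) (Row2 (RSKList u))
  witness : ∀ z ∈ Row2 (RSKList u), ∀ y ∈ Row1 (RSKList u), y < z →
    ∃ c, y ≤ c ∧ c < z ∧ [z, c] <+ u

namespace TwoRowInvariant

variable {u : List ℕ} {x : ℕ}

lemma nil : TwoRowInvariant [] where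
  letters := rfl
  disjoint := by simp [RSKList, Row1]
  witness := by simp [RSKList, Row2]

lemma mem_of_mem_row1 (h : TwoRowInvariant u) {a : ℕ} (ha : a ∈ Row1 (RSKList u)) :
    a ∈ u := by
  simpa [← List.mem_toFinset, h.letters] using Or.inl ha

lemma mem_of_mem_row2 (h : TwoRowInvariant u) {a : ℕ} (ha : a ∈ Row2 (RSKList u)) :
    a ∈ u := by
  simpa [← List.mem_toFinset, h.letters] using Or.inr ha

lemma append_singleton_of_find?_eq_none (h : TwoRowInvariant u) (hx : x ∉ u)
    (hf : ((RSKList u).getD 0 []).find? (x < ·) = none) : TwoRowInvariant (u ++ [x]) := by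
  obtain ⟨h1, h2⟩ := rows_rowInsert_of_find?_eq_none hf
  rw [← RSKList_append_singleton] at h1 h2
  refine ⟨?_, ?_, ?_⟩
  · rw [h1, h2, toFinset_append_singleton, h.letters, Finset.insert_union]
  · rw [h1, h2]
    exact Finset.disjoint_insert_left.mpr ⟨fun hx2 => hx (h.mem_of_mem_row2 hx2), h.disjoint⟩
  · rw [h1, h2]
    intro z hz y hy hyz
    rcases Finset.mem_insert.mp hy with rfl | hy
    · exact ⟨y, le_rfl, hyz, pair_sublist_append_singleton (h.mem_of_mem_row2 hz) y⟩
    · obtain ⟨c, hyc, hcz, hsub⟩ := h.witness z hz y hy hyz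
      exact ⟨c, hyc, hcz, hsub.trans (List.sublist_append_left u [x])⟩

lemma append_singleton_of_find?_eq_some (h : TwoRowInvariant u) (hx : x ∉ u)
    (hav : Avoids321 (u ++ [x])) {y : ℕ}
    (hf : ((RSKList u).getD 0 []).find? (x < ·) = some y) : TwoRowInvariant (u ++ [x]) := by
  obtain ⟨⟨hy, hxy⟩, hmin⟩ := isLeast_of_find?_lt_eq_some (RSKList_first_row u).1 hf
  have hy1 : y ∈ Row1 (RSKList u) := List.mem_toFinset.mpr hy
  have hrow2 : ∀ z ∈ Row2 (RSKList u), z ≤ y := by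
    intro z hz
    by_contra! hyz
    obtain ⟨c, hyc, hcz, hsub⟩ := h.witness z hz y hy1 hyz
    exact hav ⟨z, c, x, hsub.append (List.Sublist.refl [x]), hxy.trans_le hyc, hcz⟩
  obtain ⟨h1, h2⟩ := rows_rowInsert_of_find?_eq_some hf hrow2
  rw [← RSKList_append_singleton] at h1 h2
  refine ⟨?_, ?_, ?_⟩
  · rw [h1, h2, toFinset_append_singleton, h.letters]
    ext a
    by_cases hay : a = y <;> simp [hay, hy1]
  · rw [h1, h2]
    refine Finset.disjoint_insert_left.mpr ⟨?_, Finset.disjoint_insert_right.mpr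
      ⟨Finset.notMem_erase y _,
        Finset.disjoint_of_subset_left (Finset.erase_subset y _) h.disjoint⟩⟩
    simpa [hxy.ne] using fun hx2 => hx (h.mem_of_mem_row2 hx2)
  · rw [h1, h2]
    have hzu : ∀ z ∈ insert y (Row2 (RSKList u)), z ∈ u := by
      intro z hz
      rcases Finset.mem_insert.mp hz with rfl | hz
      · exact h.mem_of_mem_row1 hy1
      · exact h.mem_of_mem_row2 hz
    intro z hz a ha haz
    rcases Finset.mem_insert.mp ha with rfl | ha
    · exact ⟨a, le_rfl, haz, pair_sublist_append_singleton (hzu z hz) a⟩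
    obtain ⟨hay, ha1⟩ := Finset.mem_erase.mp ha
    rcases Finset.mem_insert.mp hz with rfl | hz
    · have hax : a ≤ x := not_lt.mp fun hxa =>
        (hmin ⟨List.mem_toFinset.mp ha1, hxa⟩).not_gt haz
      exact ⟨x, hax, hxy, pair_sublist_append_singleton (h.mem_of_mem_row1 hy1) x⟩
    · obtain ⟨c, hac, hcz, hsub⟩ := h.witness z hz a ha1 haz
      exact ⟨c, hac, hcz, hsub.trans (List.sublist_append_left u [x])⟩

end TwoRowInvariant

lemma twoRowInvariant_of_avoids321 {u : List ℕ} (hn : u.Nodup) (ha : Avoids321 u) :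
    TwoRowInvariant u := by
  induction u using List.reverseRecOn with
  | nil => exact TwoRowInvariant.nil
  | append_singleton u x ih =>
    have h := ih (List.nodup_append.mp hn).1 (ha.of_sublist (List.sublist_append_left u [x]))
    have hx : x ∉ u := fun hx =>
      (List.nodup_append.mp hn).2.2 x hx x (List.mem_singleton_self x) rfl
    rcases hf : ((RSKList u).getD 0 []).find? (x < ·) with _ | y
    · exact h.append_singleton_of_find?_eq_none hx hf
    · exact h.append_singleton_of_find?_eq_some hx ha hf

lemma Row2_RSKList_eq_sdiff {u : List ℕ} (hn : u.Nodup) (ha : Avoids321 u) :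
    Row2 (RSKList u) = u.toFinset \ Row1 (RSKList u) := by
  have h := twoRowInvariant_of_avoids321 hn ha
  rw [h.letters, Finset.union_sdiff_left, Finset.sdiff_eq_self_of_disjoint h.disjoint.symm]

lemma Row2_RSKList_subset_of_swap {P S : List ℕ} {a b : ℕ} (hab : a < b)
    (hvn : (P ++ a :: b :: S).Nodup) (hva : Avoids321 (P ++ a :: b :: S))
    (hwn : (P ++ b :: a :: S).Nodup) (hwa : Avoids321 (P ++ b :: a :: S)) :
    Row2 (RSKList (P ++ a :: b :: S)) ⊆ Row2 (RSKList (P ++ b :: a :: S)) := by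
  have hP : ∀ c ∈ P, c < b := by
    intro c hc
    have hcb : c ≠ b := (List.nodup_append.mp hwn).2.2 c hc b List.mem_cons_self
    have hsub : [c, b, a] <+ P ++ b :: a :: S :=
      (List.singleton_sublist.mpr hc).append (((List.nil_sublist S).cons_cons a).cons_cons b)
    exact lt_of_le_of_ne (not_lt.mp fun hbc => hwa ⟨c, b, a, hsub, hab, hbc⟩) hcb
  have hrow1 : Row1 (RSKList (P ++ b :: a :: S)) ⊆ Row1 (RSKList (P ++ a :: b :: S)) := by
    rw [(RSKList_first_row _).2, (RSKList_first_row _).2, List.foldl_append, List.foldl_append]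
    refine foldl_patienceStep_mono (patienceStep_swap_subset (fun c hc => hP c ?_) hab) S
    simpa using foldl_patienceStep_subset ∅ P hc
  rw [Row2_RSKList_eq_sdiff hvn hva, Row2_RSKList_eq_sdiff hwn hwa,
    List.toFinset_eq_of_perm _ _ ((List.Perm.swap b a S).append_left P)]
  exact Finset.sdiff_subset_sdiff le_rfl hrow1

lemma oneLine_nodup {n : ℕ} (w : Equiv.Perm (Fin n)) : (oneLine w).Nodup :=
  List.nodup_ofFn.mpr (Fin.val_injective.comp w.injective)

lemma FullyCommutative.avoids321 {n : ℕ} {w : Equiv.Perm (Fin n)} (hw : FullyCommutative w) :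
    Avoids321 (oneLine w) := by
  rintro ⟨a, b, c, hsub, hcb, hba⟩
  obtain ⟨f, hf⟩ := List.sublist_iff_exists_fin_orderEmbedding_get_eq.mp hsub
  let p : Fin 3 → Fin n := fun k => Fin.cast List.length_ofFn (f k)
  have hp : ∀ k, (w (p k) : ℕ) = [a, b, c].get k := fun k => by
    rw [hf k]; simp only [oneLine, List.get_ofFn]; rfl
  refine hw ⟨p 0, p 1, p 2, f.lt_iff_lt.mpr (by simp), f.lt_iff_lt.mpr (by simp), ?_, ?_⟩
  · rw [Fin.lt_def, hp, hp]; exact hcb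
  · rw [Fin.lt_def, hp, hp]; exact hba

section SimpleTransposition

variable {n i : ℕ} (h : i + 1 < n)

lemma oneLine_eq_append (v : Equiv.Perm (Fin n)) :
    oneLine v = (oneLine v).take i ++ (v ⟨i, by omega⟩ : ℕ) :: (v ⟨i + 1, h⟩ : ℕ) ::
      (oneLine v).drop (i + 2) := by
  apply List.ext_getElem (by simp [oneLine]; omega)
  intro j h1 h2
  simp only [oneLine, List.getElem_ofFn, List.getElem_append, List.getElem_take,
    List.getElem_cons, List.getElem_drop, List.length_take, List.length_ofFn]
  split_ifs <;> first | omega | (congr 2; simp only [Fin.mk.injEq]; omega)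

lemma oneLine_mul_simpleTr (v : Equiv.Perm (Fin n)) :
    oneLine (v * simpleTr i h) = (oneLine v).take i ++ (v ⟨i + 1, h⟩ : ℕ) ::
      (v ⟨i, by omega⟩ : ℕ) :: (oneLine v).drop (i + 2) := by
  apply List.ext_getElem (by simp [oneLine]; omega)
  intro j h1 h2
  simp only [oneLine, List.getElem_ofFn, List.getElem_append, List.getElem_take,
    List.getElem_cons, List.getElem_drop, List.length_take, List.length_ofFn,
    Equiv.Perm.mul_apply, simpleTr, Equiv.swap_apply_def, Fin.mk.injEq]
  split_ifs <;> first | omega | (congr 2; simp only [Fin.mk.injEq]; omega)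

lemma simpleTr_lt_simpleTr {p q : Fin n} (hpq : p < q)
    (hne : (p, q) ≠ (⟨i, by omega⟩, ⟨i + 1, h⟩)) : simpleTr i h p < simpleTr i h q := by
  obtain ⟨p, hp⟩ := p
  obtain ⟨q, hq⟩ := q
  simp only [ne_eq, Prod.mk.injEq, Fin.mk.injEq] at hne
  simp only [simpleTr, Equiv.swap_apply_def, Fin.mk.injEq, Fin.lt_def] at hpq ⊢
  split_ifs <;> dsimp only <;> omega

lemma invCount_mul_simpleTr {u : Equiv.Perm (Fin n)}
    (hasc : u ⟨i, by omega⟩ < u ⟨i + 1, h⟩) :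
    invCount (u * simpleTr i h) = invCount u + 1 := by
  set s := simpleTr i h
  set i₀ : Fin n := ⟨i, by omega⟩
  set i₁ : Fin n := ⟨i + 1, h⟩
  have hs : s i₀ = i₁ ∧ s i₁ = i₀ :=
    ⟨Equiv.swap_apply_left _ _, Equiv.swap_apply_right _ _⟩
  have hss : ∀ p, s (s p) = p := Equiv.swap_apply_self _ _
  let φ : Fin n × Fin n → Fin n × Fin n := fun p => (s p.1, s p.2)
  have hφφ : ∀ p, φ (φ p) = p := fun p => Prod.ext (hss p.1) (hss p.2)
  have hmem : (i₀, i₁) ∈ Finset.univ.filter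
      (fun p : Fin n × Fin n => p.1 < p.2 ∧ (u * s) p.2 < (u * s) p.1) := by
    rw [Finset.mem_filter]
    refine ⟨Finset.mem_univ _, Fin.lt_def.mpr (Nat.lt_succ_self i), ?_⟩
    rwa [Equiv.Perm.mul_apply, Equiv.Perm.mul_apply, hs.1, hs.2]
  rw [invCount, invCount, ← Finset.card_erase_add_one hmem]
  congr 1
  refine Finset.card_nbij' φ φ ?_ ?_ (fun p _ => hφφ p) (fun p _ => hφφ p)
  · intro p hp
    obtain ⟨hne, hp⟩ := Finset.mem_erase.mp hp
    rw [Finset.mem_filter] at hp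
    rw [Finset.mem_coe, Finset.mem_filter]
    exact ⟨Finset.mem_univ _, simpleTr_lt_simpleTr h hp.2.1 hne, hp.2.2⟩
  · intro p hp
    rw [Finset.mem_coe, Finset.mem_filter] at hp
    obtain ⟨-, hlt, hinv⟩ := hp
    have hne : p ≠ (i₀, i₁) := by
      rintro rfl
      exact hinv.not_gt hasc
    rw [Finset.mem_coe, Finset.mem_erase, Finset.mem_filter]
    refine ⟨fun he => ?_, Finset.mem_univ _, simpleTr_lt_simpleTr h hlt hne, ?_⟩
    · have hp : p = (i₁, i₀) := by
        rw [← hφφ p, he]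
        exact Prod.ext hs.1 hs.2
      rw [hp] at hlt
      exact absurd hlt (Fin.lt_def.not.mpr (by simp [i₀, i₁]))
    · simpa only [Equiv.Perm.mul_apply, φ, hss] using hinv

lemma lt_of_invCount_mul_simpleTr {v : Equiv.Perm (Fin n)}
    (hinv : invCount (v * simpleTr i h) = invCount v + 1) :
    v ⟨i, by omega⟩ < v ⟨i + 1, h⟩ := by
  by_contra! hle
  have hlt : (v * simpleTr i h) ⟨i, by omega⟩ < (v * simpleTr i h) ⟨i + 1, h⟩ := by
    rw [Equiv.Perm.mul_apply, Equiv.Perm.mul_apply, simpleTr, Equiv.swap_apply_left,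
      Equiv.swap_apply_right]
    exact lt_of_le_of_ne hle (v.injective.ne (by simp))
  have hback := invCount_mul_simpleTr h hlt
  rw [mul_assoc, show simpleTr i h * simpleTr i h = 1 from Equiv.swap_mul_self _ _, mul_one]
    at hback
  omega

lemma FullyCommutative.of_mul_simpleTr {u : Equiv.Perm (Fin n)}
    (hw : FullyCommutative (u * simpleTr i h)) (hasc : u ⟨i, by omega⟩ < u ⟨i + 1, h⟩) :
    FullyCommutative u := by
  rintro ⟨p, q, r, hpq, hqr, hrq, hqp⟩
  have hne : ∀ {a b : Fin n}, u b < u a → (a, b) ≠ (⟨i, by omega⟩, ⟨i + 1, h⟩) := by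
    intro a b hba he
    obtain ⟨rfl, rfl⟩ := Prod.mk.inj he
    exact hba.not_gt hasc
  have hss : ∀ a, (u * simpleTr i h) (simpleTr i h a) = u a := fun a => by
    rw [Equiv.Perm.mul_apply, simpleTr, Equiv.swap_apply_self]
  refine hw ⟨simpleTr i h p, simpleTr i h q, simpleTr i h r, simpleTr_lt_simpleTr h hpq (hne hqp),
    simpleTr_lt_simpleTr h hqr (hne hrq), ?_, ?_⟩ <;> rwa [hss, hss]

end SimpleTransposition

lemma RWCovers.fullyCommutative_and_row2_subset {n : ℕ} {u w : Equiv.Perm (Fin n)}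
    (hc : RWCovers u w) (hw : FullyCommutative w) :
    FullyCommutative u ∧ Row2 (RSKP u) ⊆ Row2 (RSKP w) := by
  obtain ⟨i, h, rfl, hinv⟩ := hc
  have hasc := lt_of_invCount_mul_simpleTr h hinv
  have hu := hw.of_mul_simpleTr h hasc
  have hun := oneLine_nodup u
  have hua := hu.avoids321
  have hwn := oneLine_nodup (u * simpleTr i h)
  have hwa := hw.avoids321
  rw [oneLine_eq_append h u] at hun hua
  rw [oneLine_mul_simpleTr h u] at hwn hwa
  refine ⟨hu, ?_⟩
  rw [RSKP, RSKP, oneLine_mul_simpleTr h u]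
  conv_lhs => rw [oneLine_eq_append h u]
  exact Row2_RSKList_subset_of_swap hasc hun hua hwn hwa

lemma RightWeakLE.fullyCommutative_and_row2_subset {n : ℕ} {v w : Equiv.Perm (Fin n)}
    (hle : RightWeakLE v w) (hw : FullyCommutative w) :
    FullyCommutative v ∧ Row2 (RSKP v) ⊆ Row2 (RSKP w) := by
  induction hle with
  | refl => exact ⟨hw, subset_rfl⟩
  | tail _ hcov ih =>
    obtain ⟨hu, hsub⟩ := hcov.fullyCommutative_and_row2_subset hw
    exact ⟨(ih hu).1, (ih hu).2.trans hsub⟩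

lemma CrowdedSet.mono {s t : Finset ℕ} (hst : s ⊆ t) : CrowdedSet s → CrowdedSet t := by
  rintro ⟨x, y, hx, hcard⟩
  have hle := Finset.card_le_card (Finset.filter_subset_filter
    (fun a : ℕ => y ≤ (a : ℤ) ∧ (a : ℤ) ≤ y + 2 * x) hst)
  exact ⟨x, y, hx, hcard.trans_le (by exact_mod_cast hle)⟩

theorem uncrowded_order_ideal_general {n : ℕ} (v w : Equiv.Perm (Fin n))
    (hw : FullyCommutative w)
    (hle : RightWeakLE v w) :
    (¬ CrowdedPerm w → ¬ CrowdedPerm v) ∧ (CrowdedPerm v → CrowdedPerm w) := by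
  have hmono : CrowdedPerm v → CrowdedPerm w :=
    CrowdedSet.mono (hle.fullyCommutative_and_row2_subset hw).2
  exact ⟨mt hmono, hmono⟩

/-- **Lemma.** In the right weak order on fully commutative permutations, the
uncrowded permutations form an order ideal and the crowded permutations a dual
order ideal. -/
theorem uncrowded_order_ideal {n : ℕ} (v w : Equiv.Perm (Fin n))
    (hv : FullyCommutative v) (hw : FullyCommutative w)
    (hle : RightWeakLE v w) :
    (¬ CrowdedPerm w → ¬ CrowdedPerm v) ∧ (CrowdedPerm v → CrowdedPerm w) :=
  uncrowded_order_ideal_general v w hw hle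
end

section
/- Let w ∈ S_n be a fully commutative permutation and suppose d is a descent of w (i.e., w(d) > w(d+1)) such that, during the RSK insertion of w, the value w(d+1) does not bump w(d). Then P(w) = P(w·s_d). -/
/-!
Write `w = p a b q` with `a = w(d) > b = w(d+1)`. Avoiding 321, every letter of `p` is smaller
than `a`, so inserting `a` into `P(p)` just appends it to the first row. As `b` does not bump `a`,
it bumps an entry `y` of the first row of `P(p)` with `b < y < a`. Inserting `a` then `b`, or
`b` then `a`, therefore both replace `y` by `b`, append `a` to the first row and insert `y` into
the lower rows, so `P(p a b) = P(p b a)`; the letters of `q` are then inserted identically.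
-/

lemma find?_lt_eq_none_of_forall_le {R : List ℕ} {a : ℕ} (h : ∀ x ∈ R, x ≤ a) :
    R.find? (a < ·) = none :=
  List.find?_eq_none.2 fun x hx => by simpa using h x hx

lemma rowInsert_cons_of_find?_eq_none {R : List ℕ} {rest : List (List ℕ)} {x : ℕ}
    (h : R.find? (x < ·) = none) : rowInsert (R :: rest) x = (R ++ [x]) :: rest := by
  rw [rowInsert, h]

lemma rowInsert_cons_of_find?_eq_some {R : List ℕ} {rest : List (List ℕ)} {x y : ℕ}
    (h : R.find? (x < ·) = some y) :
    rowInsert (R :: rest) x = (R.map fun z => if z = y then x else z) :: rowInsert rest y := by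
  rw [rowInsert, h]

lemma mem_of_mem_rowInsert {T : List (List ℕ)} {c x : ℕ} {r : List ℕ}
    (hr : r ∈ rowInsert T c) (hx : x ∈ r) : x = c ∨ ∃ r' ∈ T, x ∈ r' := by
  induction T generalizing c r with
  | nil =>
    simp only [rowInsert, List.mem_singleton] at hr
    subst hr
    exact Or.inl (List.mem_singleton.1 hx)
  | cons R rest ih =>
    cases hf : R.find? (c < ·) with
    | none =>
      rw [rowInsert_cons_of_find?_eq_none hf] at hr
      rcases List.mem_cons.1 hr with rfl | hr
      · rcases List.mem_append.1 hx with hx | hx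
        · exact Or.inr ⟨R, List.mem_cons_self, hx⟩
        · exact Or.inl (List.mem_singleton.1 hx)
      · exact Or.inr ⟨r, List.mem_cons_of_mem _ hr, hx⟩
    | some y =>
      rw [rowInsert_cons_of_find?_eq_some hf] at hr
      rcases List.mem_cons.1 hr with rfl | hr
      · obtain ⟨z, hz, rfl⟩ := List.mem_map.1 hx
        split_ifs with hzy
        · exact Or.inl rfl
        · exact Or.inr ⟨R, List.mem_cons_self, hz⟩
      · rcases ih hr hx with rfl | ⟨r', hr', hx'⟩
        · exact Or.inr ⟨R, List.mem_cons_self, List.mem_of_find?_eq_some hf⟩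
        · exact Or.inr ⟨r', List.mem_cons_of_mem _ hr', hx'⟩

lemma RSKList_append (p q : List ℕ) : RSKList (p ++ q) = q.foldl rowInsert (RSKList p) :=
  List.foldl_append

lemma mem_of_mem_RSKList {l r : List ℕ} {x : ℕ} (hr : r ∈ RSKList l) (hx : x ∈ r) :
    x ∈ l := by
  induction l using List.reverseRecOn generalizing r with
  | nil => simp [RSKList] at hr
  | append_singleton l c ih =>
    rw [RSKList_append, List.foldl_cons, List.foldl_nil] at hr
    rcases mem_of_mem_rowInsert hr hx with rfl | ⟨r', hr', hx'⟩
    · exact List.mem_append_right _ (List.mem_singleton_self _)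
    · exact List.mem_append_left _ (ih hr' hx')

lemma mem_of_mem_getD_RSKList {l : List ℕ} {i x : ℕ} (hx : x ∈ (RSKList l).getD i []) :
    x ∈ l := by
  rw [List.getD_eq_getElem?_getD] at hx
  cases hr : (RSKList l)[i]? with
  | none => simp [hr] at hx
  | some r =>
    rw [hr, Option.getD_some] at hx
    exact mem_of_mem_RSKList (List.mem_of_getElem? hr) hx

lemma getD_zero_rowInsert_of_forall_le {T : List (List ℕ)} {a : ℕ}
    (ha : ∀ x ∈ T.getD 0 [], x ≤ a) : (rowInsert T a).getD 0 [] = T.getD 0 [] ++ [a] := by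
  cases T with
  | nil => rfl
  | cons R rest =>
    rw [rowInsert_cons_of_find?_eq_none (find?_lt_eq_none_of_forall_le (R := R) ha)]
    rfl

lemma rowInsert_rowInsert_comm {T : List (List ℕ)} {a b y : ℕ}
    (ha : ∀ x ∈ T.getD 0 [], x < a) (hy : (T.getD 0 []).find? (b < ·) = some y) :
    rowInsert (rowInsert T a) b = rowInsert (rowInsert T b) a := by
  obtain ⟨R, rest, rfl⟩ : ∃ R rest, T = R :: rest := by
    cases T with
    | nil => simp at hy
    | cons R rest => exact ⟨R, rest, rfl⟩
  simp only [List.getD_cons_zero] at ha hy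
  have hya : y < a := ha y (List.mem_of_find?_eq_some hy)
  have hby : b < y := by simpa using List.find?_some hy
  have ha' : ∀ x ∈ R.map (fun z => if z = y then b else z), x ≤ a := by
    simp only [List.mem_map, forall_exists_index, and_imp, forall_apply_eq_imp_iff₂]
    intro z hz
    split_ifs
    · omega
    · exact (ha z hz).le
  rw [rowInsert_cons_of_find?_eq_none (find?_lt_eq_none_of_forall_le fun x hx => (ha x hx).le),
    rowInsert_cons_of_find?_eq_some (by rw [List.find?_append, hy]; rfl),
    rowInsert_cons_of_find?_eq_some hy,
    rowInsert_cons_of_find?_eq_none (find?_lt_eq_none_of_forall_le ha')]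
  simp [hya.ne']

lemma RSKList_append_cons_cons_comm {p q : List ℕ} {a b : ℕ} (hp : ∀ x ∈ p, x < a)
    (hba : b < a) (hnb : ¬ BumpsAt (p ++ a :: b :: q) (p.length + 1) a) :
    RSKList (p ++ a :: b :: q) = RSKList (p ++ b :: a :: q) := by
  have hT : ∀ x ∈ (RSKList p).getD 0 [], x < a := fun x hx => hp x (mem_of_mem_getD_RSKList hx)
  -- If `b` bumped nothing from the first row of `P(p)`, it would bump the appended `a`.
  obtain ⟨y, hy⟩ : ∃ y, ((RSKList p).getD 0 []).find? (b < ·) = some y := by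
    refine Option.ne_none_iff_exists'.1 fun hnone => hnb ⟨by simp, ?_⟩
    have htake : (p ++ a :: b :: q).take (p.length + 1) = p ++ [a] := by
      simp [List.take_append]
    have hb : (p ++ a :: b :: q).getD (p.length + 1) 0 = b := by
      simp [List.getD_eq_getElem?_getD]
    rw [htake, hb, RSKList_append, List.foldl_cons, List.foldl_nil,
      getD_zero_rowInsert_of_forall_le fun x hx => (hT x hx).le, List.find?_append, hnone]
    simp [hba]
  simp only [RSKList_append, List.foldl_cons, rowInsert_rowInsert_comm hT hy]

lemma entry_of_lt {n : ℕ} (w : Equiv.Perm (Fin n)) {i : ℕ} (h : i < n) :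
    entry w i = w ⟨i, h⟩ :=
  dif_pos h

lemma entry_of_le {n : ℕ} (w : Equiv.Perm (Fin n)) {i : ℕ} (h : n ≤ i) : entry w i = i :=
  dif_neg (not_lt.2 h)

lemma entry_mul_simpleTr {n : ℕ} (w : Equiv.Perm (Fin n)) {d : ℕ} (hd : d + 1 < n) (i : ℕ) :
    entry (w * simpleTr d hd) i = entry w (Equiv.swap d (d + 1) i) := by
  by_cases hi : i < n
  · have hswap : Equiv.swap d (d + 1) i = ((simpleTr d hd ⟨i, hi⟩ : Fin n) : ℕ) :=
      Fin.val_injective.swap_apply (⟨d, by omega⟩ : Fin n) ⟨d + 1, hd⟩ ⟨i, hi⟩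
    rw [hswap, entry_of_lt _ hi, entry_of_lt _ (Fin.is_lt _)]
    rfl
  · rw [Equiv.swap_apply_of_ne_of_ne (by omega) (by omega), entry_of_le _ (not_lt.1 hi),
      entry_of_le _ (not_lt.1 hi)]

lemma oneLine_eq_map_range {n : ℕ} (w : Equiv.Perm (Fin n)) :
    oneLine w = (List.range n).map (entry w) := by
  apply List.ext_getElem (by simp [oneLine])
  intro i h _
  have hi : i < n := by simpa [oneLine] using h
  simp [oneLine, entry_of_lt w hi]

lemma range_eq_append_cons_cons {d n : ℕ} (hd : d + 1 < n) :
    List.range n = List.range d ++ d :: (d + 1) :: List.range' (d + 2) (n - (d + 2)) := by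
  obtain ⟨m, rfl⟩ : ∃ m, n = d + (m + 1 + 1) := ⟨n - (d + 2), by omega⟩
  rw [List.range_eq_range', List.range_eq_range', ← List.range'_append]
  simp [List.range'_succ]
  omega

lemma map_swap_range {d n : ℕ} (hd : d + 1 < n) :
    (List.range n).map (Equiv.swap d (d + 1)) =
      List.range d ++ (d + 1) :: d :: List.range' (d + 2) (n - (d + 2)) := by
  rw [range_eq_append_cons_cons hd, List.map_append, List.map_cons, List.map_cons,
    Equiv.swap_apply_left, Equiv.swap_apply_right]
  congr 3
  · refine (List.map_congr_left fun i hi => ?_).trans (List.map_id _)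
    rw [List.mem_range] at hi
    exact Equiv.swap_apply_of_ne_of_ne (by omega) (by omega)
  · refine (List.map_congr_left fun i hi => ?_).trans (List.map_id _)
    rw [List.mem_range'_1] at hi
    exact Equiv.swap_apply_of_ne_of_ne (by omega) (by omega)

lemma oneLine_mul_simpleTr_eq {n : ℕ} (w : Equiv.Perm (Fin n)) {d : ℕ} (hd : d + 1 < n) :
    ∃ p q : List ℕ, p.length = d ∧ oneLine w = p ++ entry w d :: entry w (d + 1) :: q ∧
      oneLine (w * simpleTr d hd) = p ++ entry w (d + 1) :: entry w d :: q := by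
  refine ⟨(List.range d).map (entry w), (List.range' (d + 2) (n - (d + 2))).map (entry w),
    by simp, by simp [oneLine_eq_map_range, range_eq_append_cons_cons hd], ?_⟩
  rw [oneLine_eq_map_range, funext (entry_mul_simpleTr w hd), ← Function.comp_def,
    ← List.map_map, map_swap_range hd]
  simp

lemma getElem_oneLine {n : ℕ} (w : Equiv.Perm (Fin n)) {i : ℕ} (h : i < (oneLine w).length) :
    (oneLine w)[i] = w ⟨i, by simpa [oneLine] using h⟩ := by
  simp [oneLine]

lemma FullyCommutative.lt_of_mem_of_oneLine_eq {n : ℕ} {w : Equiv.Perm (Fin n)}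
    (hw : FullyCommutative w) {p q : List ℕ} {a b x : ℕ} (h : oneLine w = p ++ a :: b :: q)
    (hba : b < a) (hx : x ∈ p) : x < a := by
  obtain ⟨i, hi, rfl⟩ := List.getElem_of_mem hx
  have hlen : p.length + 1 < n := by
    have := congrArg List.length h
    simp only [oneLine, List.length_ofFn, List.length_append, List.length_cons] at this
    omega
  have hx' := getElem_oneLine w (i := i) (by simp [oneLine]; omega)
  have ha := getElem_oneLine w (i := p.length) (by simp [oneLine]; omega)
  have hb := getElem_oneLine w (i := p.length + 1) (by simp [oneLine]; omega)
  simp only [h, List.getElem_append_left hi, List.getElem_append_right (Nat.le_refl _),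
    List.getElem_append_right (Nat.le_add_right _ 1)] at hx' ha hb
  simp only [tsub_self, List.getElem_cons_zero, add_tsub_cancel_left, List.getElem_cons_succ]
    at ha hb
  have hne : p[i] ≠ a := by
    rw [hx', ha]
    exact Fin.val_ne_of_ne (w.injective.ne (by simp; omega))
  refine lt_of_le_of_ne (not_lt.1 fun hax => hw ⟨⟨i, by omega⟩, ⟨p.length, by omega⟩,
    ⟨p.length + 1, by omega⟩, Fin.mk_lt_mk.2 hi, Fin.mk_lt_mk.2 (Nat.lt_succ_self _),
    ?_, ?_⟩) hne
  · rw [hb, ha] at hba; exact hba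
  · rw [hx', ha] at hax; exact hax

/-- **Lemma.** If `d` is a descent of the fully commutative permutation `w` and
`w(d+1)` does not bump `w(d)` during RSK insertion, then `P(w) = P(w·s_d)`. -/
theorem non_bumping_descent_tableau {n : ℕ} (w : Equiv.Perm (Fin n))
    (hw : FullyCommutative w) (d : ℕ) (hd : d + 1 < n)
    (hdesc : entry w (d + 1) < entry w d)
    (hnb : ¬ BumpsAt (oneLine w) (d + 1) (entry w d)) :
    RSKP w = RSKP (w * simpleTr d hd) := by
  obtain ⟨p, q, hp, hline, hline'⟩ := oneLine_mul_simpleTr_eq w hd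
  rw [show d + 1 = p.length + 1 by omega, hline] at hnb
  rw [RSKP, RSKP, hline, hline']
  exact RSKList_append_cons_cons_comm (fun _ => hw.lt_of_mem_of_oneLine_eq hline hdesc) hdesc hnb
end
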